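/- arXiv:1302.4218 — 2 statements merged into one kernel-verified Lean document; each statement's English description precedes it below -/
import Mathlib

section
/- There exist constants ε₀ > 0 and C > 0 such that for every ε ∈ (0, ε₀] and every z ∈ ℂ² with |z - 2i e₁| < 2ε (where e₁ = (1,0)), there exist ζ, η ∈ ℂ² with ζ·ζ = 0, η·η = 0, z = ζ + η, |ζ - γ| ≤ Cε and |η + γ̄| ≤ Cε, where γ = (i,1). -/
/-!
The null vectors `γ = (i, 1)` and `γ̄ = (-i, 1)` form a basis of `ℂ²`, and every multiple of a
null vector is null. So the splitting `z = a γ + c γ̄` along this basis writes `z` as a sum of two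
null vectors. At `z = 2i e₁ = γ - γ̄` the coordinates are `a = 1`, `c = -1`, and since the
coordinates depend linearly (with norm at most one) on `z`, they move by at most `‖z - 2i e₁‖`.
-/

open Complex

def IsNull (v : EuclideanSpace ℂ (Fin 2)) : Prop := v 0 ^ 2 + v 1 ^ 2 = 0

lemma IsNull.smul {v : EuclideanSpace ℂ (Fin 2)} (hv : IsNull v) (c : ℂ) : IsNull (c • v) := by
  unfold IsNull at *
  simp only [PiLp.smul_apply, smul_eq_mul]
  linear_combination c ^ 2 * hv

lemma isNull_of_apply {v : EuclideanSpace ℂ (Fin 2)} {u : ℂ} (hv : v 0 = u ∧ v 1 = 1)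
    (hu : u ^ 2 = -1) : IsNull v := by
  unfold IsNull
  rw [hv.1, hv.2, hu]
  ring

/-- The coordinate of `z` along `γ` is `nullCoord (-i) z`, and along `γ̄` it is `nullCoord i z`. -/
noncomputable def nullCoord (u : ℂ) (z : EuclideanSpace ℂ (Fin 2)) : ℂ := (z 1 + u * z 0) / 2

lemma nullCoord_sub (u : ℂ) (z w : EuclideanSpace ℂ (Fin 2)) :
    nullCoord u (z - w) = nullCoord u z - nullCoord u w := by
  simp only [nullCoord, PiLp.sub_apply]
  ring

lemma norm_nullCoord_le {u : ℂ} (hu : ‖u‖ = 1) (w : EuclideanSpace ℂ (Fin 2)) :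
    ‖nullCoord u w‖ ≤ ‖w‖ :=
  calc ‖nullCoord u w‖ ≤ (‖w 1‖ + ‖u‖ * ‖w 0‖) / 2 := by
        rw [nullCoord, norm_div, ← norm_mul]
        gcongr
        · exact norm_add_le _ _
        · simp
    _ ≤ (‖w‖ + 1 * ‖w‖) / 2 := by
        rw [hu]
        gcongr <;> exact PiLp.norm_apply_le w _
    _ = ‖w‖ := by ring

lemma eq_nullCoord_smul_add {γ γbar : EuclideanSpace ℂ (Fin 2)}
    (hγ : γ 0 = I ∧ γ 1 = 1) (hγbar : γbar 0 = -I ∧ γbar 1 = 1) (z : EuclideanSpace ℂ (Fin 2)) :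
    z = nullCoord (-I) z • γ + nullCoord I z • γbar := by
  ext i
  fin_cases i
  · simp only [Fin.zero_eta, nullCoord, PiLp.add_apply, PiLp.smul_apply, smul_eq_mul, hγ.1, hγbar.1]
    linear_combination z 0 * I_sq
  · simp only [Fin.mk_one, nullCoord, PiLp.add_apply, PiLp.smul_apply, smul_eq_mul, hγ.2, hγbar.2]
    ring

lemma norm_eq_sqrt_two_of_apply {v : EuclideanSpace ℂ (Fin 2)} {u : ℂ} (hv : v 0 = u ∧ v 1 = 1)
    (hu : ‖u‖ = 1) : ‖v‖ = √2 := by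
  rw [EuclideanSpace.norm_eq, Fin.sum_univ_two, hv.1, hv.2, hu]
  norm_num

theorem stmt_5 (γ γbar ctr : EuclideanSpace ℂ (Fin 2))
    (hγ : γ 0 = Complex.I ∧ γ 1 = 1)
    (hγbar : γbar 0 = -Complex.I ∧ γbar 1 = 1)
    (hctr : ctr 0 = 2 * Complex.I ∧ ctr 1 = 0) :  -- ctr = 2i e₁
    ∃ ε₀ > (0:ℝ), ∃ C > (0:ℝ), ∀ ε : ℝ, 0 < ε → ε ≤ ε₀ →
      ∀ z : EuclideanSpace ℂ (Fin 2), ‖z - ctr‖ < 2 * ε →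
        ∃ ζ η : EuclideanSpace ℂ (Fin 2),
          ζ 0 ^ 2 + ζ 1 ^ 2 = 0 ∧ η 0 ^ 2 + η 1 ^ 2 = 0 ∧
          z = ζ + η ∧ ‖ζ - γ‖ ≤ C * ε ∧ ‖η + γbar‖ ≤ C * ε := by
  have hctr_γ : nullCoord (-I) ctr = 1 := by
    simp only [nullCoord, hctr.1, hctr.2]
    linear_combination (-1 : ℂ) * I_sq
  have hctr_γbar : nullCoord I ctr = -1 := by
    simp only [nullCoord, hctr.1, hctr.2]
    linear_combination I_sq
  refine ⟨1, one_pos, 2 * √2, by positivity, fun ε _ _ z hz => ?_⟩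
  refine ⟨nullCoord (-I) z • γ, nullCoord I z • γbar,
    (isNull_of_apply hγ I_sq).smul _, (isNull_of_apply hγbar (by simp)).smul _,
    eq_nullCoord_smul_add hγ hγbar z, ?_, ?_⟩
  · calc ‖nullCoord (-I) z • γ - γ‖ = ‖nullCoord (-I) (z - ctr)‖ * ‖γ‖ := by
          rw [nullCoord_sub, hctr_γ, ← norm_smul, sub_smul, one_smul]
      _ ≤ 2 * ε * √2 := by
          rw [norm_eq_sqrt_two_of_apply hγ norm_I]
          gcongr
          exact (norm_nullCoord_le (by simp) _).trans hz.le
      _ = 2 * √2 * ε := by ring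
  · calc ‖nullCoord I z • γbar + γbar‖ = ‖nullCoord I (z - ctr)‖ * ‖γbar‖ := by
          rw [nullCoord_sub, hctr_γbar, sub_neg_eq_add, ← norm_smul, add_smul, one_smul]
      _ ≤ 2 * ε * √2 := by
          rw [norm_eq_sqrt_two_of_apply hγbar (by simp)]
          gcongr
          exact (norm_nullCoord_le norm_I _).trans hz.le
      _ = 2 * √2 * ε := by ring
end

section
/- Let f ∈ L^∞(ℝⁿ) have compact support contained in the half-space {x : x₁ ≤ 0}, and let Tf(z) = ∫ exp(-(z-y)·(z-y)/(2h)) f(y) dy. Then for every z = x + iξ ∈ ℂⁿ with Re z₁ = x₁ ≥ 0, one has |Tf(z)| ≤ (2πh)^{n/2} exp((|ξ|² - x₁²)/(2h)) ‖f‖_{L^∞}. -/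
/-!
Write `z = x + iξ`. The modulus of the kernel is `exp ((|ξ|² - |x - y|²) / (2h))`. On the support of
`f` we have `y₁ ≤ 0 ≤ x₁`, so `(x₁ - y₁)² ≥ x₁² + y₁²`: replacing `x` by `x'`, its projection onto the
hyperplane `x₁ = 0`, gives `|x - y|² ≥ x₁² + |x' - y|²`. Hence the integrand is bounded by
`exp ((|ξ|² - x₁²) / (2h)) ‖f‖_∞` times a Gaussian centred at `x'`, whose integral is `(2πh)^{n/2}`.
-/

open MeasureTheory Real

lemma Complex.re_sum_sq_sub_ofReal {ι : Type*} [Fintype ι] (z : ι → ℂ) (y : ι → ℝ) :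
    (∑ j, (z j - y j) ^ 2).re = ∑ j, ((z j).re - y j) ^ 2 - ∑ j, (z j).im ^ 2 := by
  simp only [Complex.re_sum, ← Finset.sum_sub_distrib, sq, Complex.mul_re, Complex.sub_re,
    Complex.sub_im, Complex.ofReal_re, Complex.ofReal_im, sub_zero]

lemma sq_add_sum_sq_sub_update_le {ι : Type*} [Fintype ι] [DecidableEq ι] {a y : ι → ℝ} {i : ι}
    (ha : 0 ≤ a i) (hy : y i ≤ 0) :
    a i ^ 2 + ∑ j, (y j - Function.update a i 0 j) ^ 2 ≤ ∑ j, (a j - y j) ^ 2 := by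
  have hrest : ∑ j ∈ {i}ᶜ, (y j - Function.update a i 0 j) ^ 2 = ∑ j ∈ {i}ᶜ, (a j - y j) ^ 2 :=
    Finset.sum_congr rfl fun j hj => by
      rw [Function.update_of_ne (by simpa using hj)]
      ring
  rw [Fintype.sum_eq_add_sum_compl i, Fintype.sum_eq_add_sum_compl i, hrest,
    Function.update_self]
  nlinarith [mul_nonneg ha (neg_nonneg.2 hy)]

section Gaussian

variable {V : Type*} [NormedAddCommGroup V] [InnerProductSpace ℝ V] [FiniteDimensional ℝ V]
  [MeasurableSpace V] [BorelSpace V]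

lemma integral_rexp_neg_mul_sq_norm_sub {b : ℝ} (hb : 0 < b) (x : V) :
    ∫ v : V, rexp (-b * ‖v - x‖ ^ 2) = (π / b) ^ (Module.finrank ℝ V / 2 : ℝ) := by
  rw [integral_sub_right_eq_self (fun v => rexp (-b * ‖v‖ ^ 2)),
    GaussianFourier.integral_rexp_neg_mul_sq_norm hb]

lemma integrable_rexp_neg_mul_sq_norm_sub {b : ℝ} (hb : 0 < b) (x : V) :
    Integrable fun v : V => rexp (-b * ‖v - x‖ ^ 2) :=
  .of_integral_ne_zero <| by
    rw [integral_rexp_neg_mul_sq_norm_sub hb]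
    positivity

end Gaussian

lemma norm_cexp_neg_sum_sq_sub_div {ι : Type*} [Fintype ι] (z : ι → ℂ) (y : ι → ℝ) (h : ℝ) :
    ‖Complex.exp (-(∑ j, (z j - y j) ^ 2) / (2 * (h : ℂ)))‖ =
      rexp ((∑ j, (z j).im ^ 2 - ∑ j, ((z j).re - y j) ^ 2) / (2 * h)) := by
  rw [Complex.norm_exp, show (2 * (h : ℂ)) = ((2 * h : ℝ) : ℂ) by push_cast; ring,
    Complex.div_ofReal_re, Complex.neg_re, Complex.re_sum_sq_sub_ofReal, neg_sub]

lemma norm_cexp_neg_sum_sq_sub_div_le {ι : Type*} [Fintype ι] [DecidableEq ι] {h : ℝ}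
    (hh : 0 < h) {z : ι → ℂ} {i : ι} (hz : 0 ≤ (z i).re) {y : EuclideanSpace ℝ ι} (hy : y i ≤ 0) :
    ‖Complex.exp (-(∑ j, (z j - y j) ^ 2) / (2 * (h : ℂ)))‖ ≤
      rexp ((∑ j, (z j).im ^ 2 - (z i).re ^ 2) / (2 * h)) *
        rexp (-(2 * h)⁻¹ * ‖y - WithLp.toLp 2 (Function.update (fun j => (z j).re) i 0)‖ ^ 2) := by
  have hnorm : ‖y - WithLp.toLp 2 (Function.update (fun j => (z j).re) i 0)‖ ^ 2 =
      ∑ j, (y j - Function.update (fun j => (z j).re) i 0 j) ^ 2 := by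
    simp [EuclideanSpace.norm_sq_eq]
  rw [norm_cexp_neg_sum_sq_sub_div, ← Real.exp_add, hnorm]
  gcongr
  have := sq_add_sum_sq_sub_update_le (a := fun j => (z j).re) hz hy
  rw [neg_mul, inv_mul_eq_div, ← sub_eq_add_neg, div_sub_div_same]
  exact div_le_div_of_nonneg_right (by linarith) (by positivity)

theorem stmt_7_general (n : ℕ) [NeZero n] (h : ℝ) (hh : 0 < h)
    (f : EuclideanSpace ℝ (Fin n) → ℂ)
    (hhalf : ∀ y, 0 < y 0 → f y = 0)  -- f is supported in {y : y₁ ≤ 0}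
    (M : ℝ) (hM : ∀ y, ‖f y‖ ≤ M)
    (T : (Fin n → ℂ) → ℂ)
    (hT : ∀ z, T z = ∫ y : EuclideanSpace ℝ (Fin n),
        Complex.exp (-(∑ j, (z j - (y j : ℂ)) ^ 2) / (2 * (h : ℂ))) * f y) :
    ∀ z : Fin n → ℂ, 0 ≤ (z 0).re →
      ‖T z‖ ≤ (2 * Real.pi * h) ^ ((n : ℝ) / 2) *
        Real.exp (((∑ j, (z j).im ^ 2) - (z 0).re ^ 2) / (2 * h)) * M := by
  intro z hz
  set C := rexp ((∑ j, (z j).im ^ 2 - (z 0).re ^ 2) / (2 * h))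
  set x : EuclideanSpace ℝ (Fin n) := WithLp.toLp 2 (Function.update (fun j => (z j).re) 0 0)
  have hb : 0 < (2 * h)⁻¹ := by positivity
  have hM0 : 0 ≤ M := (norm_nonneg _).trans (hM 0)
  have hpointwise (y : EuclideanSpace ℝ (Fin n)) :
      ‖Complex.exp (-(∑ j, (z j - (y j : ℂ)) ^ 2) / (2 * (h : ℂ))) * f y‖ ≤
        C * M * rexp (-(2 * h)⁻¹ * ‖y - x‖ ^ 2) := by
    rw [norm_mul, mul_right_comm]
    rcases le_or_gt (y 0) 0 with hy | hy
    · exact mul_le_mul (norm_cexp_neg_sum_sq_sub_div_le hh hz hy) (hM y) (norm_nonneg _)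
        (by positivity)
    · rw [hhalf y hy, norm_zero, mul_zero]
      positivity
  rw [hT]
  calc _ ≤ ∫ y, C * M * rexp (-(2 * h)⁻¹ * ‖y - x‖ ^ 2) :=
        norm_integral_le_of_norm_le ((integrable_rexp_neg_mul_sq_norm_sub hb x).const_mul _)
          (.of_forall hpointwise)
    _ = _ := by
        rw [integral_const_mul, integral_rexp_neg_mul_sq_norm_sub hb, finrank_euclideanSpace_fin,
          div_inv_eq_mul]
        ring_nf

theorem stmt_7 (n : ℕ) [NeZero n] (h : ℝ) (hh : 0 < h)
    (f : EuclideanSpace ℝ (Fin n) → ℂ) (hf : Measurable f) (hsupp : HasCompactSupport f)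
    (hhalf : ∀ y, 0 < y 0 → f y = 0)  -- f is supported in {y : y₁ ≤ 0}
    (M : ℝ) (hM : ∀ y, ‖f y‖ ≤ M)
    (T : (Fin n → ℂ) → ℂ)
    (hT : ∀ z, T z = ∫ y : EuclideanSpace ℝ (Fin n),
        Complex.exp (-(∑ j, (z j - (y j : ℂ)) ^ 2) / (2 * (h : ℂ))) * f y) :
    ∀ z : Fin n → ℂ, 0 ≤ (z 0).re →
      ‖T z‖ ≤ (2 * Real.pi * h) ^ ((n : ℝ) / 2) *
        Real.exp (((∑ j, (z j).im ^ 2) - (z 0).re ^ 2) / (2 * h)) * M :=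
  stmt_7_general n h hh f hhalf M hM T hT
end
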